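/- arXiv:1210.6259 — 5 statements merged into one kernel-verified Lean document; each statement's English description precedes it below -/
import Mathlib

section
/- Let ε ∈ (0,1) be such that the set B = {x ∈ S : λ(x) < 1−ε} satisfies μ(B) > 0, and let Y₁ be the indicator of the event that vertex 1 is isolated in G(n,K) and X₁ ∈ B. Then E[Y₁] ≥ ∫_B (1 − λ(x)pₙ)^{n−1} dμ(x) ≥ (1 − (1−ε)pₙ)^{n−1} μ(B), and consequently n·E[Y₁] → ∞ as n → ∞. -/
open MeasureTheory Filter Set

noncomputable section

/-- The edge probability scaling `pₙ = log n / n`. -/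
def pEdge (n : ℕ) : ℝ := Real.log n / n

/-- `λ(x) = ∫ K(x,y) dμ(y)`. -/
def lamFun {S : Type*} [MeasurableSpace S] (K : S → S → ℝ) (μ : Measure S) (x : S) : ℝ :=
  ∫ y, K x y ∂μ

/-- `λ₂(x) = (∫ K(x,y)² dμ(y))^{1/2}`. -/
def lam2Fun {S : Type*} [MeasurableSpace S] (K : S → S → ℝ) (μ : Measure S) (x : S) : ℝ :=
  Real.sqrt (∫ y, (K x y) ^ 2 ∂μ)

/-- The isolation parameter `Λ = essinf λ`. -/
def isolParam {S : Type*} [MeasurableSpace S] (K : S → S → ℝ) (μ : Measure S) : ℝ :=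
  essInf (lamFun K μ) μ

/-- `‖λ₂‖_∞`, the `μ`-essential supremum of `λ₂`. -/
def lam2Norm {S : Type*} [MeasurableSpace S] (K : S → S → ℝ) (μ : Measure S) : ℝ :=
  essSup (lam2Fun K μ) μ

/-- A kernel is irreducible if there is no measurable `A` with `0 < μ A < 1` and
`K = 0` `(μ ⊗ μ)`-a.e. on `A × Aᶜ`. -/
def IrreducibleKernel {S : Type*} [MeasurableSpace S] (K : S → S → ℝ) (μ : Measure S) : Prop :=
  ¬ ∃ A : Set S, MeasurableSet A ∧ 0 < μ A ∧ μ A < 1 ∧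
      ∀ᵐ p ∂(μ.prod μ), p.1 ∈ A → p.2 ∈ Aᶜ → K p.1 p.2 = 0

/-- The inhomogeneous random graph `G(n,K)` as a deterministic function of the points `x` and
of auxiliary i.i.d. uniforms `u`: the pair `{i,j}` (`i ≠ j`) is an edge iff
`u (min i j) (max i j) < min 1 (K (x i) (x j) * pₙ)`. -/
def graphOf {S : Type*} (K : S → S → ℝ) (n : ℕ) (x : Fin n → S) (u : Fin n → Fin n → ℝ) :
    SimpleGraph (Fin n) where
  Adj i j := i ≠ j ∧ u (min i j) (max i j) < min 1 (K (x (min i j)) (x (max i j)) * pEdge n)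
  symm := by
    constructor
    rintro i j ⟨hne, hlt⟩
    exact ⟨hne.symm, by rwa [min_comm j i, max_comm j i]⟩
  loopless := ⟨fun i h => h.1 rfl⟩

/-- The law of the randomness underlying `G(n,K)`: `n` i.i.d. points with law `μ` together with
an independent array of i.i.d. uniforms on `[0,1]`. -/
def graphMeasure {S : Type*} [MeasurableSpace S] (μ : Measure S) (n : ℕ) :
    Measure ((Fin n → S) × (Fin n → Fin n → ℝ)) :=
  (Measure.pi fun _ : Fin n => μ).prod
    (Measure.pi fun _ : Fin n => Measure.pi fun _ : Fin n => volume.restrict (Icc (0:ℝ) 1))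


open scoped ENNReal Topology

/-! Given the positions, vertex `0` is isolated exactly when every uniform `u 0 j` lies above
the corresponding edge probability. Integrating out the uniforms and then the `n + 1` other
independent points gives
`P(0 isolated, X₀ ∈ B) = ∫_B (∫ (1 - min 1 (K x y pₙ)) dμ(y))^{n+1} dμ(x)`,
and the inner integral is at least `1 - λ(x) pₙ ≥ 1 - (1 - ε) pₙ` on `B`. Finally
`log (1 - t) ≥ -t / (1 - t)` shows that `n (1 - a pₙ)^{n-1} ≥ n^{1-b}` eventually,
for any `a < b < 1`. -/

lemma pEdge_nonneg (n : ℕ) : 0 ≤ pEdge n :=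
  div_nonneg (Real.log_natCast_nonneg n) (Nat.cast_nonneg n)

lemma pEdge_le_one (n : ℕ) : pEdge n ≤ 1 :=
  div_le_one_of_le₀ (Real.log_le_self (Nat.cast_nonneg n)) (Nat.cast_nonneg n)

lemma tendsto_pEdge_atTop : Tendsto pEdge atTop (𝓝 0) :=
  Real.isLittleO_log_id_atTop.tendsto_div_nhds_zero.comp tendsto_natCast_atTop_atTop

lemma measurable_lamFun {S : Type*} [MeasurableSpace S] {μ : Measure S} [SFinite μ]
    {K : S → S → ℝ} (hK : Measurable (Function.uncurry K)) : Measurable (lamFun K μ) :=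
  hK.stronglyMeasurable.integral_prod_right'.measurable

lemma Real.exp_neg_mul_div_one_sub_le_one_sub_pow {x : ℝ} (hx : x < 1) (m : ℕ) :
    Real.exp (-(m * (x / (1 - x)))) ≤ (1 - x) ^ m := by
  have h : 0 < 1 - x := by linarith
  rw [← Real.exp_log (pow_pos h m), Real.log_pow, Real.exp_le_exp, ← mul_neg]
  refine mul_le_mul_of_nonneg_left ?_ m.cast_nonneg
  have hlog := Real.one_sub_inv_le_log_of_pos h
  rwa [show 1 - (1 - x)⁻¹ = -(x / (1 - x)) by field_simp; ring] at hlog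

lemma tendsto_mul_one_sub_mul_pEdge_pow_atTop {a : ℝ} (ha0 : 0 ≤ a) (ha1 : a < 1) :
    Tendsto (fun n : ℕ => ((n : ℝ) + 2) * (1 - a * pEdge (n + 2)) ^ (n + 1)) atTop atTop := by
  obtain ⟨b, hab, hb1⟩ := exists_between ha1
  have hp : Tendsto (fun n : ℕ => pEdge (n + 2)) atTop (𝓝 0) :=
    tendsto_pEdge_atTop.comp (tendsto_add_atTop_nat 2)
  have hratio : Tendsto (fun n : ℕ => a / (1 - a * pEdge (n + 2))) atTop (𝓝 a) := by
    have h := ((hp.const_mul a).const_sub 1).inv₀ (by simp)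
    simpa [div_eq_mul_inv] using h.const_mul a
  have hL : Tendsto (fun n : ℕ => Real.log ((n : ℝ) + 2)) atTop atTop :=
    Real.tendsto_log_atTop.comp (tendsto_atTop_add_const_right _ 2 tendsto_natCast_atTop_atTop)
  refine tendsto_atTop_mono' atTop ?_
    (Real.tendsto_exp_atTop.comp (hL.const_mul_atTop (sub_pos.2 hb1)))
  filter_upwards [hratio.eventually (eventually_le_nhds hab)] with n hn
  set L := Real.log ((n : ℝ) + 2)
  set x := a * pEdge (n + 2)
  have hN : (0 : ℝ) < n + 2 := by positivity
  have hx0 : 0 ≤ x := mul_nonneg ha0 (pEdge_nonneg _)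
  have hx1 : x < 1 := by nlinarith [pEdge_le_one (n + 2)]
  have hNx : ((n : ℝ) + 2) * x = a * L := by
    simp only [x, L, pEdge]; push_cast; field_simp
  have hexp : (n + 1 : ℕ) * (x / (1 - x)) ≤ b * L := calc
    (n + 1 : ℕ) * (x / (1 - x)) ≤ ((n : ℝ) + 2) * (x / (1 - x)) := by
      refine mul_le_mul_of_nonneg_right ?_ (div_nonneg hx0 (by linarith))
      push_cast; linarith
    _ = a / (1 - x) * L := by rw [← mul_div_assoc, hNx]; ring
    _ ≤ b * L := by gcongr; exact Real.log_nonneg (by linarith)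
  calc Real.exp ((1 - b) * L) = ((n : ℝ) + 2) * Real.exp (-(b * L)) := by
        rw [sub_mul, one_mul, sub_eq_add_neg, Real.exp_add, Real.exp_log hN]
    _ ≤ ((n : ℝ) + 2) * (1 - x) ^ (n + 1) := by
        gcongr
        exact (Real.exp_le_exp.2 (neg_le_neg hexp)).trans
          (Real.exp_neg_mul_div_one_sub_le_one_sub_pow hx1 _)

section Lintegral

variable {α : Type*} [MeasurableSpace α] (μ : Measure α) [SigmaFinite μ]

lemma lintegral_pi_prod_eq_pow {n : ℕ} {f : α → ℝ≥0∞} (hf : Measurable f) :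
    ∫⁻ x : Fin n → α, ∏ i, f (x i) ∂Measure.pi (fun _ => μ) = (∫⁻ a, f a ∂μ) ^ n := by
  induction n with
  | zero => simp
  | succ n ih =>
    have hprod : Measurable fun y : Fin n → α => ∏ i, f (y i) :=
      Finset.measurable_prod _ fun i _ => hf.comp (measurable_pi_apply i)
    rw [pow_succ', ← ih, ← lintegral_prod_mul hf.aemeasurable hprod.aemeasurable,
      ← (measurePreserving_piFinSuccAbove (fun _ => μ) 0).lintegral_comp
        (f := fun q => f q.1 * ∏ i, f (q.2 i))
        ((hf.comp measurable_fst).mul (hprod.comp measurable_snd))]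
    simp [Fin.prod_univ_succ, Fin.tail]

lemma lintegral_pi_mul_prod_succ {m : ℕ} {g : α → ℝ≥0∞} {h : α → α → ℝ≥0∞}
    (hg : Measurable g) (hh : Measurable (Function.uncurry h)) :
    ∫⁻ x : Fin (m + 1) → α, g (x 0) * ∏ j : Fin m, h (x 0) (x j.succ) ∂Measure.pi (fun _ => μ) =
      ∫⁻ a, g a * (∫⁻ y, h a y ∂μ) ^ m ∂μ := by
  have hF : Measurable fun q : α × (Fin m → α) => g q.1 * ∏ j, h q.1 (q.2 j) :=
    (hg.comp measurable_fst).mul <| Finset.measurable_prod _ fun j _ =>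
      hh.comp (measurable_fst.prodMk ((measurable_pi_apply j).comp measurable_snd))
  refine ((measurePreserving_piFinSuccAbove (fun _ => μ) 0).lintegral_comp hF).trans ?_
  rw [lintegral_prod _ hF.aemeasurable]
  refine lintegral_congr fun a => ?_
  have hprod : Measurable fun y : Fin m → α => ∏ j, h a (y j) :=
    Finset.measurable_prod _ fun j _ => hh.of_uncurry_left.comp (measurable_pi_apply j)
  dsimp only
  rw [lintegral_const_mul _ hprod, lintegral_pi_prod_eq_pow μ hh.of_uncurry_left]

end Lintegral

lemma ofReal_integral_le_lintegral_ofReal {α : Type*} [MeasurableSpace α] {μ : Measure α}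
    {f : α → ℝ} (hf : Integrable f μ) :
    ENNReal.ofReal (∫ x, f x ∂μ) ≤ ∫⁻ x, ENNReal.ofReal (f x) ∂μ := calc
  ENNReal.ofReal (∫ x, f x ∂μ) ≤ ENNReal.ofReal (∫ x, max (f x) 0 ∂μ) :=
    ENNReal.ofReal_le_ofReal (integral_mono hf hf.pos_part fun x => le_max_left _ _)
  _ = ∫⁻ x, ENNReal.ofReal (max (f x) 0) ∂μ :=
    ofReal_integral_eq_lintegral_ofReal hf.pos_part (ae_of_all _ fun x => le_max_right _ _)
  _ = ∫⁻ x, ENNReal.ofReal (f x) ∂μ := by simp [ENNReal.ofReal_max]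

lemma ofReal_one_sub_integral_le_lintegral {α : Type*} [MeasurableSpace α] {μ : Measure α}
    [IsProbabilityMeasure μ] {f : α → ℝ} (hf : Integrable f μ) :
    ENNReal.ofReal (1 - ∫ x, f x ∂μ) ≤ ∫⁻ x, ENNReal.ofReal (1 - f x) ∂μ := by
  simpa [integral_sub (integrable_const 1) hf] using
    ofReal_integral_le_lintegral_ofReal ((integrable_const 1).sub hf)

lemma pow_mul_measure_le_setIntegral_pow {α : Type*} [MeasurableSpace α] {μ : Measure α}
    [IsFiniteMeasure μ] {f : α → ℝ} (hf : Measurable f) {B : Set α} (hB : MeasurableSet B)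
    {c : ℝ} (hc : 0 ≤ c) (hcf : ∀ x ∈ B, c ≤ f x) (hf1 : ∀ x ∈ B, f x ≤ 1) (m : ℕ) :
    c ^ m * (μ B).toReal ≤ ∫ x in B, f x ^ m ∂μ := by
  have hint : IntegrableOn (fun x => f x ^ m) B μ :=
    Integrable.of_bound (hf.pow_const m).aestronglyMeasurable 1 <|
      (ae_restrict_iff' hB).2 <| ae_of_all _ fun x hx => by
        rw [Real.norm_of_nonneg (pow_nonneg (hc.trans (hcf x hx)) m)]
        exact pow_le_one₀ (hc.trans (hcf x hx)) (hf1 x hx)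
  simpa [measureReal_def] using setIntegral_ge_of_const_le_real hB (measure_ne_top μ B)
    (fun x hx => pow_le_pow_left₀ hc (hcf x hx) m) hint

instance : IsProbabilityMeasure (volume.restrict (Icc (0 : ℝ) 1)) :=
  ⟨by rw [Measure.restrict_apply_univ, Real.volume_Icc, sub_zero, ENNReal.ofReal_one]⟩

lemma volume_restrict_Icc_zero_one_Ici {c : ℝ} (hc : 0 ≤ c) :
    volume.restrict (Icc (0 : ℝ) 1) (Ici c) = ENNReal.ofReal (1 - c) := by
  have hinter : Ici c ∩ Icc 0 1 = Icc c 1 := by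
    ext t
    simp only [mem_inter_iff, mem_Ici, mem_Icc]
    exact ⟨fun h => ⟨h.1, h.2.2⟩, fun h => ⟨h.1, hc.trans h.1, h.2⟩⟩
  rw [Measure.restrict_apply measurableSet_Ici, hinter, Real.volume_Icc]

lemma uniformArray_row_ge {ι : Type*} [Fintype ι] [DecidableEq ι] (i : ι) {c : ι → ℝ}
    (hc : ∀ j, 0 ≤ c j) :
    (Measure.pi fun _ : ι => Measure.pi fun _ : ι => volume.restrict (Icc (0 : ℝ) 1))
        {u | ∀ j, j ≠ i → c j ≤ u i j} =
      ∏ j, if j = i then 1 else ENNReal.ofReal (1 - c j) := by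
  have hrow : {u : ι → ι → ℝ | ∀ j, j ≠ i → c j ≤ u i j} =
      (fun u => u i) ⁻¹' univ.pi fun j => if j = i then univ else Ici (c j) := by
    ext u
    simp only [mem_ofPred_eq, mem_preimage, mem_univ_pi]
    refine forall_congr' fun j => ?_
    split_ifs <;> simp [*]
  rw [hrow, (measurePreserving_eval _ i).measure_preimage
    (MeasurableSet.univ_pi fun j => by split_ifs <;> measurability).nullMeasurableSet,
    Measure.pi_pi]
  refine Finset.prod_congr rfl fun j _ => ?_
  split_ifs
  · exact measure_univ
  · exact volume_restrict_Icc_zero_one_Ici (hc j)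

section Graph

variable {S : Type*} {K : S → S → ℝ} {m : ℕ} {B : Set S}

def isolatedZeroEvent (K : S → S → ℝ) (m : ℕ) (B : Set S) :
    Set ((Fin (m + 1) → S) × (Fin (m + 1) → Fin (m + 1) → ℝ)) :=
  {ω | (∀ j, ¬ (graphOf K (m + 1) ω.1 ω.2).Adj 0 j) ∧ ω.1 0 ∈ B}

lemma graphOf_adj_zero_iff {x : Fin (m + 1) → S} {u : Fin (m + 1) → Fin (m + 1) → ℝ}
    {j : Fin (m + 1)} :
    (graphOf K (m + 1) x u).Adj 0 j ↔ 0 ≠ j ∧ u 0 j < min 1 (K (x 0) (x j) * pEdge (m + 1)) := by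
  simp [graphOf]

lemma mem_isolatedZeroEvent_iff {ω : (Fin (m + 1) → S) × (Fin (m + 1) → Fin (m + 1) → ℝ)} :
    ω ∈ isolatedZeroEvent K m B ↔
      ω.1 0 ∈ B ∧ ∀ j, j ≠ 0 → min 1 (K (ω.1 0) (ω.1 j) * pEdge (m + 1)) ≤ ω.2 0 j := by
  simp only [isolatedZeroEvent, mem_ofPred_eq, graphOf_adj_zero_iff, not_and, not_lt]
  exact and_comm.trans (and_congr_right' (forall_congr' fun j => by rw [ne_comm]))

lemma uniformArray_slice_isolatedZeroEvent (hK : ∀ x y, 0 ≤ K x y) (x : Fin (m + 1) → S) :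
    (Measure.pi fun _ : Fin (m + 1) => Measure.pi fun _ : Fin (m + 1) =>
        volume.restrict (Icc (0 : ℝ) 1)) (Prod.mk x ⁻¹' isolatedZeroEvent K m B) =
      B.indicator 1 (x 0) *
        ∏ j : Fin m, ENNReal.ofReal (1 - min 1 (K (x 0) (x j.succ) * pEdge (m + 1))) := by
  by_cases hx : x 0 ∈ B
  · have hslice : Prod.mk x ⁻¹' isolatedZeroEvent K m B =
        {u | ∀ j, j ≠ 0 → min 1 (K (x 0) (x j) * pEdge (m + 1)) ≤ u 0 j} := by
      ext u
      simp [mem_isolatedZeroEvent_iff, hx]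
    rw [hslice, uniformArray_row_ge 0 fun j => le_min zero_le_one
        (mul_nonneg (hK _ _) (pEdge_nonneg _)), Fin.prod_univ_succ, indicator_of_mem hx]
    simp [Fin.succ_ne_zero]
  · have hslice : Prod.mk x ⁻¹' isolatedZeroEvent K m B = ∅ := by
      ext u
      simp [mem_isolatedZeroEvent_iff, hx]
    simp [hslice, hx]

variable [MeasurableSpace S]

lemma measurableSet_isolatedZeroEvent (hK : Measurable (Function.uncurry K))
    (hB : MeasurableSet B) : MeasurableSet (isolatedZeroEvent K m B) := by
  have hE : isolatedZeroEvent K m B = (fun ω => ω.1 0) ⁻¹' B ∩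
      ⋂ j ≠ 0, {ω | min 1 (K (ω.1 0) (ω.1 j) * pEdge (m + 1)) ≤ ω.2 0 j} := by
    ext ω
    simp [mem_isolatedZeroEvent_iff]
  rw [hE]
  refine (measurable_pi_apply 0 |>.comp measurable_fst hB).inter
    (MeasurableSet.iInter fun j => MeasurableSet.iInter fun _ => measurableSet_le ?_ ?_)
  · have hx : Measurable fun ω : (Fin (m + 1) → S) × (Fin (m + 1) → Fin (m + 1) → ℝ) =>
        (ω.1 0, ω.1 j) := by fun_prop
    exact measurable_const.min ((hK.comp hx).mul_const _)
  · fun_prop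

lemma graphMeasure_isolatedZeroEvent (μ : Measure S) [SigmaFinite μ]
    (hKnonneg : ∀ x y, 0 ≤ K x y) (hKmeas : Measurable (Function.uncurry K))
    (hB : MeasurableSet B) :
    graphMeasure μ (m + 1) (isolatedZeroEvent K m B) =
      ∫⁻ a in B, (∫⁻ y, ENNReal.ofReal (1 - min 1 (K a y * pEdge (m + 1))) ∂μ) ^ m ∂μ := by
  have hh : Measurable (Function.uncurry fun a y =>
      ENNReal.ofReal (1 - min 1 (K a y * pEdge (m + 1)))) :=
    ENNReal.measurable_ofReal.comp
      (measurable_const.sub (measurable_const.min (hKmeas.mul_const _)))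
  rw [graphMeasure, Measure.prod_apply (measurableSet_isolatedZeroEvent hKmeas hB),
    lintegral_congr (uniformArray_slice_isolatedZeroEvent hKnonneg),
    lintegral_pi_mul_prod_succ μ (measurable_one.indicator hB) hh, ← lintegral_indicator hB]
  refine lintegral_congr fun a => ?_
  by_cases ha : a ∈ B <;> simp [ha]

end Graph

instance {S : Type*} [MeasurableSpace S] (μ : Measure S) [IsProbabilityMeasure μ] (n : ℕ) :
    IsProbabilityMeasure (graphMeasure μ n) := by
  unfold graphMeasure
  infer_instance

lemma ofReal_one_sub_lamFun_mul_le {S : Type*} [MeasurableSpace S] {μ : Measure S}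
    [IsProbabilityMeasure μ] {K : S → S → ℝ} {x : S} (hKx : Integrable (K x) μ)
    (p : ℝ) :
    ENNReal.ofReal (1 - lamFun K μ x * p) ≤ ∫⁻ y, ENNReal.ofReal (1 - min 1 (K x y * p)) ∂μ :=
  calc ENNReal.ofReal (1 - lamFun K μ x * p) = ENNReal.ofReal (1 - ∫ y, K x y * p ∂μ) := by
        rw [lamFun, integral_mul_const]
    _ ≤ ∫⁻ y, ENNReal.ofReal (1 - K x y * p) ∂μ :=
        ofReal_one_sub_integral_le_lintegral (hKx.mul_const p)
    _ ≤ ∫⁻ y, ENNReal.ofReal (1 - min 1 (K x y * p)) ∂μ :=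
        lintegral_mono fun y => ENNReal.ofReal_le_ofReal (by linarith [min_le_right 1 (K x y * p)])

lemma setIntegral_le_graphMeasure_isolatedZeroEvent {S : Type*} [MeasurableSpace S]
    (μ : Measure S) [IsProbabilityMeasure μ] {K : S → S → ℝ} (hKnonneg : ∀ x y, 0 ≤ K x y)
    (hKmeas : Measurable (Function.uncurry K)) (hKint : Integrable (Function.uncurry K) (μ.prod μ))
    {B : Set S} (hB : MeasurableSet B) {m : ℕ}
    (hBpos : ∀ x ∈ B, 0 ≤ 1 - lamFun K μ x * pEdge (m + 1)) :
    ∫ x in B, (1 - lamFun K μ x * pEdge (m + 1)) ^ m ∂μ ≤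
      (graphMeasure μ (m + 1) (isolatedZeroEvent K m B)).toReal := by
  have hnonneg : ∀ᵐ x ∂μ.restrict B, 0 ≤ (1 - lamFun K μ x * pEdge (m + 1)) ^ m :=
    (ae_restrict_iff' hB).2 (ae_of_all _ fun x hx => pow_nonneg (hBpos x hx) m)
  rw [integral_eq_lintegral_of_nonneg_ae hnonneg
    (((measurable_lamFun hKmeas).mul_const _).const_sub 1 |>.pow_const m).aestronglyMeasurable]
  refine ENNReal.toReal_mono (measure_ne_top _ _) ?_
  rw [graphMeasure_isolatedZeroEvent μ hKnonneg hKmeas hB]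
  refine lintegral_mono_ae ?_
  filter_upwards [ae_restrict_of_ae hKint.prod_right_ae, ae_restrict_mem hB] with x hKx hx
  rw [ENNReal.ofReal_pow (hBpos x hx)]
  exact pow_le_pow_left' (ofReal_one_sub_lamFun_mul_le hKx _) m

/-- The graph has `n+2 ≥ 2` vertices and vertex `0` plays the role of vertex `1`. -/
theorem first_moment_isolated_general
    {S : Type*}
    [MeasurableSpace S]
    (μ : Measure S) [IsProbabilityMeasure μ] (K : S → S → ℝ)
    (hKnonneg : ∀ x y, 0 ≤ K x y)
    (hKmeas : Measurable (Function.uncurry K))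
    (hKint : Integrable (Function.uncurry K) (μ.prod μ))
    (ε : ℝ) (hε0 : 0 < ε) (hε1 : ε < 1)
    (hB : 0 < μ {x | lamFun K μ x < 1 - ε}) :
    (∀ n : ℕ,
      (1 - (1 - ε) * pEdge (n+2)) ^ (n+1) * (μ {x | lamFun K μ x < 1 - ε}).toReal ≤
        ∫ x in {x | lamFun K μ x < 1 - ε}, (1 - lamFun K μ x * pEdge (n+2)) ^ (n+1) ∂μ ∧
      ∫ x in {x | lamFun K μ x < 1 - ε}, (1 - lamFun K μ x * pEdge (n+2)) ^ (n+1) ∂μ ≤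
        (graphMeasure μ (n+2) {ω |
          (∀ j, ¬ (graphOf K (n+2) ω.1 ω.2).Adj 0 j) ∧
            ω.1 0 ∈ {x | lamFun K μ x < 1 - ε}}).toReal) ∧
    Tendsto (fun n : ℕ => ((n:ℝ) + 2) *
        (graphMeasure μ (n+2) {ω |
          (∀ j, ¬ (graphOf K (n+2) ω.1 ω.2).Adj 0 j) ∧
            ω.1 0 ∈ {x | lamFun K μ x < 1 - ε}}).toReal)
      atTop atTop := by
  set B := {x | lamFun K μ x < 1 - ε}
  have hBmeas : MeasurableSet B := measurableSet_lt (measurable_lamFun hKmeas) measurable_const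
  have hlam : ∀ x ∈ B, 0 ≤ lamFun K μ x ∧ lamFun K μ x < 1 - ε :=
    fun x hx => ⟨integral_nonneg (hKnonneg x), hx⟩
  have hmoment : ∀ n : ℕ,
      (1 - (1 - ε) * pEdge (n + 2)) ^ (n + 1) * (μ B).toReal ≤
        ∫ x in B, (1 - lamFun K μ x * pEdge (n + 2)) ^ (n + 1) ∂μ ∧
      ∫ x in B, (1 - lamFun K μ x * pEdge (n + 2)) ^ (n + 1) ∂μ ≤
        (graphMeasure μ (n + 2) (isolatedZeroEvent K (n + 1) B)).toReal := fun n => by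
    have hp0 := pEdge_nonneg (n + 2)
    have hp1 := pEdge_le_one (n + 2)
    exact ⟨pow_mul_measure_le_setIntegral_pow
        (((measurable_lamFun hKmeas).mul_const _).const_sub 1) hBmeas (by nlinarith)
        (fun x hx => by nlinarith [hlam x hx])
        (fun x hx => by nlinarith [hlam x hx]) (n + 1),
      setIntegral_le_graphMeasure_isolatedZeroEvent μ hKnonneg hKmeas hKint hBmeas
        fun x hx => by nlinarith [hlam x hx]⟩
  refine ⟨hmoment, ?_⟩
  have hμB : 0 < (μ B).toReal := ENNReal.toReal_pos hB.ne' (measure_ne_top μ B)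
  refine tendsto_atTop_mono (fun n => ?_) ((tendsto_mul_one_sub_mul_pEdge_pow_atTop
    (sub_nonneg.2 hε1.le) (sub_lt_self 1 hε0)).atTop_mul_const hμB)
  rw [mul_assoc]
  exact mul_le_mul_of_nonneg_left ((hmoment n).1.trans (hmoment n).2) (by positivity)

/-- **First moment lower bound** (equation (2.1)).  With `B = {x : λ(x) < 1-ε}` of positive
measure and `Y₁` the indicator that vertex `1` is isolated and `X₁ ∈ B`, one has
`E[Y₁] ≥ ∫_B (1-λ(x)pₙ)^{n-1} dμ(x) ≥ (1-(1-ε)pₙ)^{n-1} μ(B)`, and `n E[Y₁] → ∞`.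
(The graph has `n+2 ≥ 2` vertices and vertex `0` plays the role of vertex `1`.) -/
theorem first_moment_isolated
    {S : Type*} [MetricSpace S] [TopologicalSpace.SeparableSpace S]
    [MeasurableSpace S] [BorelSpace S]
    (μ : Measure S) [IsProbabilityMeasure μ] (K : S → S → ℝ)
    (hKsymm : ∀ x y, K x y = K y x)
    (hKnonneg : ∀ x y, 0 ≤ K x y)
    (hKmeas : Measurable (Function.uncurry K))
    (hKint : Integrable (Function.uncurry K) (μ.prod μ))
    (ε : ℝ) (hε0 : 0 < ε) (hε1 : ε < 1)
    (hB : 0 < μ {x | lamFun K μ x < 1 - ε}) :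
    (∀ n : ℕ,
      (1 - (1 - ε) * pEdge (n+2)) ^ (n+1) * (μ {x | lamFun K μ x < 1 - ε}).toReal ≤
        ∫ x in {x | lamFun K μ x < 1 - ε}, (1 - lamFun K μ x * pEdge (n+2)) ^ (n+1) ∂μ ∧
      ∫ x in {x | lamFun K μ x < 1 - ε}, (1 - lamFun K μ x * pEdge (n+2)) ^ (n+1) ∂μ ≤
        (graphMeasure μ (n+2) {ω |
          (∀ j, ¬ (graphOf K (n+2) ω.1 ω.2).Adj 0 j) ∧
            ω.1 0 ∈ {x | lamFun K μ x < 1 - ε}}).toReal) ∧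
    Tendsto (fun n : ℕ => ((n:ℝ) + 2) *
        (graphMeasure μ (n+2) {ω |
          (∀ j, ¬ (graphOf K (n+2) ω.1 ω.2).Adj 0 j) ∧
            ω.1 0 ∈ {x | lamFun K μ x < 1 - ε}}).toReal)
      atTop atTop :=
  first_moment_isolated_general μ K hKnonneg hKmeas hKint ε hε0 hε1 hB
end
end

section
/- Let X be a random point of S with law μ, let p ≥ 0, let k ≥ 1, and let x₁,…,x_k ∈ S be points with λ₂(xᵢ) < ∞ for all i. Then E[∏_{i=1}^k (1 − K(X,xᵢ)p)₊] ≤ 1 − p·∑_{i=1}^k λ(xᵢ) + (p²/2)·(∑_{i=1}^k λ₂(xᵢ))², where (t)₊ = max(t,0). -/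
open MeasureTheory Filter Set

noncomputable section

/-! For `aᵢ ≥ 0` one has `∏ᵢ (1 - aᵢ)₊ ≤ 1 - ∑ᵢ aᵢ + (∑ᵢ aᵢ)² / 2` (induct on the number of
factors; a factor with `aᵢ > 1` kills the product). Applying this with `aᵢ = K(X, xᵢ) p` and
taking expectations, the second moment of `∑ᵢ K(X, xᵢ)` is at most `(∑ᵢ λ₂(xᵢ))²` by the
triangle inequality in `L²(μ)`. -/

theorem prod_max_one_sub_le {ι : Type*} (s : Finset ι) {a : ι → ℝ} (ha : ∀ i ∈ s, 0 ≤ a i) :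
    ∏ i ∈ s, max (1 - a i) 0 ≤ 1 - ∑ i ∈ s, a i + (∑ i ∈ s, a i) ^ 2 / 2 := by
  classical
  induction s using Finset.cons_induction with
  | empty => norm_num
  | cons j s hj ih =>
    rw [Finset.prod_cons, Finset.sum_cons]
    have hs : 0 ≤ ∑ i ∈ s, a i := Finset.sum_nonneg fun i hi => ha i (by simp [hi])
    have haj : 0 ≤ a j := ha j (by simp)
    have ih := ih fun i hi => ha i (by simp [hi])
    rcases le_or_gt (a j) 1 with hle | hgt
    · rw [max_eq_left (by linarith)]
      nlinarith [mul_le_mul_of_nonneg_left ih (sub_nonneg.2 hle),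
        mul_nonneg haj (sq_nonneg (∑ i ∈ s, a i))]
    · rw [max_eq_right (by linarith), zero_mul]
      nlinarith [sq_nonneg (a j + ∑ i ∈ s, a i - 1)]

theorem norm_prod_max_one_sub_le_one {ι : Type*} (s : Finset ι) {a : ι → ℝ}
    (ha : ∀ i ∈ s, 0 ≤ a i) : ‖∏ i ∈ s, max (1 - a i) 0‖ ≤ 1 := by
  rw [norm_prod]
  refine Finset.prod_le_one (fun _ _ => norm_nonneg _) fun i hi => ?_
  rw [Real.norm_of_nonneg (le_max_right _ _)]
  exact max_le (by linarith [ha i hi]) zero_le_one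

section L2

variable {α : Type*} [MeasurableSpace α] {μ : Measure α}

theorem sqrt_integral_sq_eq_toReal_eLpNorm {g : α → ℝ} (hg : MemLp g 2 μ) :
    √(∫ z, g z ^ 2 ∂μ) = (eLpNorm g 2 μ).toReal := by
  rw [hg.eLpNorm_eq_integral_rpow_norm two_ne_zero ENNReal.ofNat_ne_top,
    ENNReal.toReal_ofReal (by positivity), Real.sqrt_eq_rpow]
  simp [sq_abs]

theorem sqrt_integral_sq_sum_le {ι : Type*} (s : Finset ι) {f : ι → α → ℝ}
    (hf : ∀ i ∈ s, MemLp (f i) 2 μ) :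
    √(∫ z, (∑ i ∈ s, f i z) ^ 2 ∂μ) ≤ ∑ i ∈ s, √(∫ z, f i z ^ 2 ∂μ) := by
  have hsum := sqrt_integral_sq_eq_toReal_eLpNorm (memLp_finsetSum' s hf)
  simp only [Finset.sum_apply] at hsum
  rw [hsum, Finset.sum_congr rfl fun i hi => sqrt_integral_sq_eq_toReal_eLpNorm (hf i hi),
    ← ENNReal.toReal_sum fun i hi => (hf i hi).eLpNorm_ne_top]
  exact ENNReal.toReal_mono (ENNReal.sum_ne_top.2 fun i hi => (hf i hi).eLpNorm_ne_top)
    (eLpNorm_sum_le (fun i hi => (hf i hi).1) one_le_two)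

theorem integral_prod_max_one_sub_mul_le [IsProbabilityMeasure μ] {ι : Type*} (s : Finset ι)
    {f : ι → α → ℝ} (hf0 : ∀ i ∈ s, 0 ≤ f i) (hf : ∀ i ∈ s, MemLp (f i) 2 μ) {p : ℝ}
    (hp : 0 ≤ p) :
    ∫ z, ∏ i ∈ s, max (1 - f i z * p) 0 ∂μ ≤
      1 - p * ∑ i ∈ s, ∫ z, f i z ∂μ + p ^ 2 / 2 * (∑ i ∈ s, √(∫ z, f i z ^ 2 ∂μ)) ^ 2 := by
  set F := fun z => ∑ i ∈ s, f i z
  have hF : MemLp F 2 μ := memLp_finsetSum s hf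
  have hF1 : Integrable F μ := hF.integrable one_le_two
  have hF2 : Integrable (fun z => F z ^ 2) μ := hF.integrable_sq
  have hnonneg : ∀ z, ∀ i ∈ s, 0 ≤ f i z * p := fun z i hi => mul_nonneg (hf0 i hi z) hp
  have hprod : Integrable (fun z => ∏ i ∈ s, max (1 - f i z * p) 0) μ := by
    refine .of_bound ?_ 1 (.of_forall fun z => norm_prod_max_one_sub_le_one s (hnonneg z))
    exact Finset.aestronglyMeasurable_fun_prod s fun i hi =>
      (aestronglyMeasurable_const.sub ((hf i hi).1.mul_const p)).sup aestronglyMeasurable_const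
  have hlin : Integrable (fun z => 1 - p * F z) μ := (integrable_const 1).sub (hF1.const_mul p)
  have hquad : ∀ z, ∏ i ∈ s, max (1 - f i z * p) 0 ≤ 1 - p * F z + p ^ 2 / 2 * F z ^ 2 := by
    intro z
    have := prod_max_one_sub_le s (hnonneg z)
    rw [← Finset.sum_mul] at this
    linarith
  have hmoment : ∫ z, F z ^ 2 ∂μ ≤ (∑ i ∈ s, √(∫ z, f i z ^ 2 ∂μ)) ^ 2 := by
    rw [← Real.sq_sqrt (integral_nonneg fun z => sq_nonneg (F z))]
    exact pow_le_pow_left₀ (Real.sqrt_nonneg _) (sqrt_integral_sq_sum_le s hf) 2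
  calc ∫ z, ∏ i ∈ s, max (1 - f i z * p) 0 ∂μ
      ≤ ∫ z, (1 - p * F z + p ^ 2 / 2 * F z ^ 2) ∂μ :=
        integral_mono hprod (hlin.add (hF2.const_mul _)) hquad
    _ = 1 - p * ∑ i ∈ s, ∫ z, f i z ∂μ + p ^ 2 / 2 * ∫ z, F z ^ 2 ∂μ := by
        rw [integral_add hlin (hF2.const_mul _),
          integral_sub (integrable_const 1) (hF1.const_mul p), integral_const_mul,
          integral_const_mul, integral_finsetSum s fun i hi => (hf i hi).integrable one_le_two]
        simp
    _ ≤ _ := by gcongr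

end L2

theorem product_positive_part_bound_multi_general
    {S : Type*} [MeasurableSpace S]
    (μ : Measure S) [IsProbabilityMeasure μ] (K : S → S → ℝ)
    (hKsymm : ∀ x y, K x y = K y x)
    (hKnonneg : ∀ x y, 0 ≤ K x y)
    (hKmeas : Measurable (Function.uncurry K))
    (p : ℝ) (hp : 0 ≤ p) (k : ℕ) (x : Fin k → S)
    (hx : ∀ i, Integrable (fun z => (K (x i) z) ^ 2) μ) :
    ∫ z, ∏ i : Fin k, max (1 - K z (x i) * p) 0 ∂μ ≤
      1 - p * ∑ i : Fin k, lamFun K μ (x i)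
        + (p ^ 2 / 2) * (∑ i : Fin k, lam2Fun K μ (x i)) ^ 2 := by
  have hL2 : ∀ i, MemLp (K (x i)) 2 μ := fun i =>
    (memLp_two_iff_integrable_sq hKmeas.of_uncurry_left.aestronglyMeasurable).2 (hx i)
  have hKx : ∀ z i, K z (x i) = K (x i) z := fun z i => hKsymm z (x i)
  simp only [hKx]
  exact integral_prod_max_one_sub_mul_le Finset.univ (fun i _ => hKnonneg (x i))
    (fun i _ => hL2 i) hp

/-- **Pointwise product bound for `k` points** (inside Lemma 3.1). For `p ≥ 0`, `k ≥ 1` and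
points `x₁,…,x_k` with `λ₂(xᵢ) < ∞`,
`E[∏ᵢ (1-K(X,xᵢ)p)₊] ≤ 1 - p ∑ᵢ λ(xᵢ) + (p²/2)(∑ᵢ λ₂(xᵢ))²`. -/
theorem product_positive_part_bound_multi
    {S : Type*} [MetricSpace S] [TopologicalSpace.SeparableSpace S]
    [MeasurableSpace S] [BorelSpace S]
    (μ : Measure S) [IsProbabilityMeasure μ] (K : S → S → ℝ)
    (hKsymm : ∀ x y, K x y = K y x)
    (hKnonneg : ∀ x y, 0 ≤ K x y)
    (hKmeas : Measurable (Function.uncurry K))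
    (hKint : Integrable (Function.uncurry K) (μ.prod μ))
    (p : ℝ) (hp : 0 ≤ p) (k : ℕ) (hk : 1 ≤ k) (x : Fin k → S)
    (hx : ∀ i, Integrable (fun z => (K (x i) z) ^ 2) μ) :
    ∫ z, ∏ i : Fin k, max (1 - K z (x i) * p) 0 ∂μ ≤
      1 - p * ∑ i : Fin k, lamFun K μ (x i)
        + (p ^ 2 / 2) * (∑ i : Fin k, lam2Fun K μ (x i)) ^ 2 :=
  product_positive_part_bound_multi_general μ K hKsymm hKnonneg hKmeas p hp k x hx
end
end

section
/- Given a separable metric space (S,d) with a Borel probability measure μ, there exists a sequence of finite partitions P_m = {A_{m,1},…,A_{m,M_m}} of S, m ≥ 1, such that: (a) each A_{m,i} is a Borel measurable set with μ(∂A_{m,i}) = 0, where ∂ denotes topological boundary; (b) P_{m+1} refines P_m, i.e. each A_{m,i} is a union of cells of P_{m+1}; (c) for μ-almost every x ∈ S, diam(A_{m,i_m(x)}) → 0 as m → ∞, where A_{m,i_m(x)} denotes the cell of P_m containing x and diam(A) = sup{d(x,y) : x,y ∈ A}. -/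
/-!
Around the points of a dense sequence take balls of radii in `(2⁻ᵏ⁻¹, 2⁻ᵏ)` whose spheres are
`μ`-null (only countably many concentric spheres can carry mass). These balls `g 0, g 1, …` form a
countable basis, and `P_m` is the partition generated by `g 0, …, g (m-1)`: the cell with index
`i < 2 ^ m` consists of the points whose membership pattern in these sets is the binary expansion
of `i`. Cell boundaries lie in the null union of the spheres, refinement is automatic, and the cell
of any point shrinks because the point lies in basis sets of arbitrarily small diameter.
-/

open MeasureTheory Set Metric TopologicalSpace
open scoped ENNReal

theorem frontier_biInter_finset_subset {X ι : Type*} [TopologicalSpace X] (s : Finset ι)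
    (t : ι → Set X) : frontier (⋂ i ∈ s, t i) ⊆ ⋃ i ∈ s, frontier (t i) := by
  classical
  induction s using Finset.induction_on with
  | empty => simp
  | insert a s _ ih =>
    rw [Finset.set_biInter_insert, Finset.set_biUnion_insert]
    exact (frontier_inter_subset _ _).trans
      (union_subset_union inter_subset_left (inter_subset_right.trans ih))

theorem frontier_setOf_mem_iff {X : Type*} [TopologicalSpace X] (s : Set X) (b : Bool) :
    frontier {x | x ∈ s ↔ b} = frontier s := by
  cases b <;> simp [← compl_def, frontier_compl]

theorem TopologicalSpace.IsTopologicalBasis.exists_mem_ediam_lt {X : Type*} [PseudoEMetricSpace X]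
    {b : Set (Set X)} (hb : IsTopologicalBasis b) (x : X) {ε : ℝ≥0∞} (hε : 0 < ε) :
    ∃ t ∈ b, x ∈ t ∧ ediam t < ε := by
  obtain ⟨δ, hδ, hδε⟩ := exists_between (ENNReal.half_pos hε.ne')
  obtain ⟨t, htb, hxt, hts⟩ := hb.exists_subset_of_mem_open (mem_eball_self hδ) isOpen_eball
  refine ⟨t, htb, hxt, ?_⟩
  calc ediam t ≤ 2 * δ := (ediam_mono hts).trans ediam_eball_le
    _ < ε := by rwa [mul_comm, ← ENNReal.lt_div_iff_mul_lt (by simp) (by simp)]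

theorem exists_isTopologicalBasis_range_null_frontier {S : Type*} [PseudoMetricSpace S]
    [SeparableSpace S] [Nonempty S] [MeasurableSpace S] [OpensMeasurableSpace S]
    (μ : Measure S) [SFinite μ] :
    ∃ g : ℕ → Set S, IsTopologicalBasis (range g) ∧ ∀ k, μ (frontier (g k)) = 0 := by
  obtain ⟨u, hu⟩ := exists_dense_seq S
  have hrad (k : ℕ) : (1 / 2 : ℝ) ^ (k + 1) < (1 / 2) ^ k :=
    pow_lt_pow_right_of_lt_one₀ (by norm_num) (by norm_num) k.lt_succ_self
  choose r hr hμr using fun p : ℕ ↦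
    exists_null_frontier_thickening μ {u p.unpair.1} (hrad p.unpair.2)
  simp only [thickening_singleton] at hμr
  refine ⟨fun p ↦ ball (u p.unpair.1) (r p),
    isTopologicalBasis_of_isOpen_of_nhds (by rintro _ ⟨p, rfl⟩; exact isOpen_ball) ?_, hμr⟩
  intro x U hxU hU
  obtain ⟨δ, hδ, hδU⟩ := Metric.isOpen_iff.1 hU x hxU
  obtain ⟨k, hk⟩ := exists_pow_lt_of_lt_one (half_pos hδ) (by norm_num : (1 / 2 : ℝ) < 1)
  obtain ⟨n, hn⟩ := hu.exists_dist_lt x (pow_pos (by norm_num : (0 : ℝ) < 1 / 2) (k + 1))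
  have hr' := hr (Nat.pair n k)
  simp only [Nat.unpair_pair] at hr'
  refine ⟨_, ⟨Nat.pair n k, rfl⟩, ?_, (ball_subset_ball' ?_).trans hδU⟩ <;>
    simp only [Nat.unpair_pair, mem_ball]
  · exact hn.trans hr'.1
  · rw [dist_comm]
    linarith [hr'.1, hr'.2]

section BitCell

variable {X : Type*} {g : ℕ → Set X} {m n i j k : ℕ} {x : X}

def bitCell (g : ℕ → Set X) (m i : ℕ) : Set X :=
  ⋂ k ∈ Finset.range m, {x | x ∈ g k ↔ i.testBit k}

theorem mem_bitCell : x ∈ bitCell g m i ↔ ∀ k < m, (x ∈ g k ↔ i.testBit k) := by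
  simp [bitCell]

theorem bitCell_subset_bitCell (h : m ≤ n) : bitCell g n i ⊆ bitCell g m i :=
  fun _ hx ↦ mem_bitCell.2 fun k hk ↦ mem_bitCell.1 hx k (hk.trans_le h)

theorem bitCell_subset (hk : k < m) (hx : x ∈ bitCell g m i) (hxk : x ∈ g k) :
    bitCell g m i ⊆ g k :=
  fun _ hy ↦ (mem_bitCell.1 hy k hk).2 ((mem_bitCell.1 hx k hk).1 hxk)

theorem testBit_eq_of_mem_bitCell (hi : x ∈ bitCell g m i) (hj : x ∈ bitCell g m j) (hk : k < m) :
    i.testBit k = j.testBit k :=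
  Bool.eq_iff_iff.2 ((mem_bitCell.1 hi k hk).symm.trans (mem_bitCell.1 hj k hk))

theorem bitCell_eq_of_mem (hi : x ∈ bitCell g m i) (hj : x ∈ bitCell g m j) :
    bitCell g m i = bitCell g m j := by
  ext y
  simp only [mem_bitCell]
  exact forall₂_congr fun k hk ↦ by rw [testBit_eq_of_mem_bitCell hi hj hk]

theorem eq_of_mem_bitCell (hi : i < 2 ^ m) (hj : j < 2 ^ m) (hxi : x ∈ bitCell g m i)
    (hxj : x ∈ bitCell g m j) : i = j := by
  refine Nat.eq_of_testBit_eq fun k ↦ ?_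
  rcases lt_or_ge k m with hk | hk
  · exact testBit_eq_of_mem_bitCell hxi hxj hk
  · have hpow : 2 ^ m ≤ 2 ^ k := Nat.pow_le_pow_right two_pos hk
    rw [Nat.testBit_lt_two_pow (hi.trans_le hpow), Nat.testBit_lt_two_pow (hj.trans_le hpow)]

theorem exists_mem_bitCell (g : ℕ → Set X) (m : ℕ) (x : X) : ∃ i < 2 ^ m, x ∈ bitCell g m i := by
  classical
  set s := (Finset.range m).filter (x ∈ g ·)
  have hs : ∀ k ∈ s, k < m := fun k hk ↦ Finset.mem_range.1 (Finset.mem_filter.1 hk).1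
  refine ⟨∑ k ∈ s, 2 ^ k, Nat.geomSum_lt le_rfl hs, mem_bitCell.2 fun k hk ↦ ?_⟩
  rw [← Nat.mem_bitIndices, ← List.mem_toFinset, Finset.toFinset_bitIndices_sum_two_pow]
  simp [s, hk]

theorem bitCell_eq_biUnion_succ (m i : ℕ) :
    bitCell g m i =
      ⋃ j ∈ {j | j < 2 ^ (m + 1) ∧ bitCell g (m + 1) j ⊆ bitCell g m i}, bitCell g (m + 1) j := by
  refine Subset.antisymm (fun x hx ↦ ?_) (iUnion₂_subset fun j hj ↦ hj.2)
  obtain ⟨j, hj, hxj⟩ := exists_mem_bitCell g (m + 1) x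
  refine mem_biUnion ⟨hj, ?_⟩ hxj
  rw [bitCell_eq_of_mem hx (bitCell_subset_bitCell m.le_succ hxj)]
  exact bitCell_subset_bitCell m.le_succ

theorem measurableSet_bitCell [MeasurableSpace X] (hg : ∀ k, MeasurableSet (g k)) (m i : ℕ) :
    MeasurableSet (bitCell g m i) :=
  Finset.measurableSet_biInter _ fun k _ ↦ by
    cases i.testBit k
    · simpa [← compl_def] using (hg k).compl
    · simpa using hg k

theorem frontier_bitCell_subset [TopologicalSpace X] (g : ℕ → Set X) (m i : ℕ) :
    frontier (bitCell g m i) ⊆ ⋃ k, frontier (g k) :=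
  (frontier_biInter_finset_subset _ _).trans <| iUnion₂_subset fun k _ ↦ by
    rw [frontier_setOf_mem_iff]
    exact subset_iUnion (fun k ↦ frontier (g k)) k

end BitCell

/-- **Existence of good partition sequences** (Lemma 3.4, i.e. Lemma 7.1 of [BJR07]).
For a separable metric space `S` with Borel probability measure `μ`, there is a sequence of
finite Borel partitions `P_m = {A m 0, …, A m (M m - 1)}` of `S` such that each cell has
`μ`-null topological boundary, `P_{m+1}` refines `P_m` (each cell of `P_m` is the union of the
cells of `P_{m+1}` it contains), and for `μ`-a.e. `x` the diameter of the cell of `P_m`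
containing `x` tends to `0` as `m → ∞`. -/
theorem exists_partition_sequence
    {S : Type*} [MetricSpace S] [TopologicalSpace.SeparableSpace S]
    [MeasurableSpace S] [BorelSpace S]
    (μ : Measure S) [IsProbabilityMeasure μ] :
    ∃ (M : ℕ → ℕ) (A : ℕ → ℕ → Set S),
      (∀ m, 1 ≤ M m) ∧
      -- each `P_m` covers `S`
      (∀ m, (⋃ i ∈ Finset.range (M m), A m i) = Set.univ) ∧
      -- the cells of `P_m` are pairwise disjoint
      (∀ m, ∀ i < M m, ∀ j < M m, i ≠ j → Disjoint (A m i) (A m j)) ∧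
      -- (a) each cell is measurable with null boundary
      (∀ m, ∀ i < M m, MeasurableSet (A m i)) ∧
      (∀ m, ∀ i < M m, μ (frontier (A m i)) = 0) ∧
      -- (b) `P_{m+1}` refines `P_m`: each cell of `P_m` is a union of cells of `P_{m+1}`
      (∀ m, ∀ i < M m,
        A m i = ⋃ j ∈ {j | j < M (m+1) ∧ A (m+1) j ⊆ A m i}, A (m+1) j) ∧
      -- (c) for a.e. `x`, the diameter of the cell containing `x` tends to `0`
      (∀ᵐ x ∂μ, ∀ ε : ENNReal, 0 < ε → ∃ m₀ : ℕ, ∀ m ≥ m₀, ∀ i < M m,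
        x ∈ A m i → EMetric.diam (A m i) < ε) := by
  have := nonempty_of_isProbabilityMeasure μ
  obtain ⟨g, hg, hμg⟩ := exists_isTopologicalBasis_range_null_frontier μ
  have hg_meas (k : ℕ) : MeasurableSet (g k) := (hg.isOpen ⟨k, rfl⟩).measurableSet
  refine ⟨fun m ↦ 2 ^ m, bitCell g, fun m ↦ Nat.one_le_two_pow, fun m ↦ ?_,
    fun m i hi j hj hij ↦ disjoint_left.2 fun x hxi hxj ↦ hij (eq_of_mem_bitCell hi hj hxi hxj),
    fun m i _ ↦ measurableSet_bitCell hg_meas m i,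
    fun m i _ ↦ measure_mono_null (frontier_bitCell_subset g m i) (measure_iUnion_null hμg),
    fun m i _ ↦ bitCell_eq_biUnion_succ m i, ae_of_all μ fun x ε hε ↦ ?_⟩
  · refine eq_univ_of_forall fun x ↦ ?_
    obtain ⟨i, hi, hx⟩ := exists_mem_bitCell g m x
    exact mem_iUnion₂.2 ⟨i, Finset.mem_range.2 hi, hx⟩
  · obtain ⟨_, ⟨k, rfl⟩, hxk, hk⟩ := hg.exists_mem_ediam_lt x hε
    exact ⟨k + 1, fun m hm i _ hxi ↦ (ediam_mono (bitCell_subset hm hxi hxk)).trans_lt hk⟩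
end

section
/- Suppose K is irreducible and continuous at (μ⊗μ)-almost every point of S×S. Then for every ε > 0 there exist m ≥ 1 and a connected component C_m of the partition graph H_m such that μ(S \ ⋃_{i∈C_m} A_{m,i}) < ε. -/
open MeasureTheory Filter Set

noncomputable section

/-- The partition graph `H_m` associated to the partition sequence `(M, A)`: its vertices are
the indices `i < M m` whose cell has positive measure, and `i ~ j` iff the infimum of `K` on
`A m i × A m j` is positive (equivalently the lower approximation kernel `K_m` is positive
there). -/
def partitionGraph {S : Type*} [MeasurableSpace S] (K : S → S → ℝ) (μ : Measure S)
    (M : ℕ → ℕ) (A : ℕ → ℕ → Set S) (m : ℕ) : SimpleGraph ℕ where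
  Adj i j := i ≠ j ∧ i < M m ∧ j < M m ∧ 0 < μ (A m i) ∧ 0 < μ (A m j) ∧
    ∃ β > 0, ∀ x ∈ A m i, ∀ y ∈ A m j, β ≤ K x y ∧ β ≤ K y x
  symm := by
    constructor
    rintro i j ⟨hne, hi, hj, hμi, hμj, β, hβ, h⟩
    exact ⟨hne.symm, hj, hi, hμj, hμi, β, hβ,
      fun y hy x hx => ⟨(h x hx y hy).2, (h x hx y hy).1⟩⟩
  loopless := ⟨fun i h => h.1 rfl⟩

/-! Call two points linked at level `m` if their cells in `P_m` have positive measure and lie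
in one component of `H_m`. Continuity of `K` and shrinking cells make almost every pair with
`K(x, y) > 0` linked at all large levels. Being eventually linked is transitive, so the set of
points eventually linked to a fixed `x₀` is closed under `K`-edges and irreducibility gives it
measure `0` or `1`. If it were null for almost every `x₀`, then `K = 0` a.e.; but then
irreducibility makes `μ` take only the values `0` and `1`, and almost all points share the single
cell of measure one at every level. Either way some `x₀` is eventually linked to almost every
point, and at a large level the component of the cell of `x₀` covers all of `S` but `ε`. -/

open Topology

lemma ae_forall_mem_imp_measure_pos {α ι : Type*} [MeasurableSpace α] [Countable ι]
    (μ : Measure α) (s : ι → Set α) : ∀ᵐ x ∂μ, ∀ i, x ∈ s i → 0 < μ (s i) := by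
  refine ae_all_iff.mpr fun i => ?_
  rcases eq_or_ne (μ (s i)) 0 with h | h
  · exact (measure_eq_zero_iff_ae_notMem.mp h).mono fun x hx hxs => absurd hxs hx
  · exact Eventually.of_forall fun _ _ => pos_iff_ne_zero.mpr h

lemma tendsto_measure_compl_of_ae_eventually_mem {α : Type*} [MeasurableSpace α]
    {μ : Measure α} [IsFiniteMeasure μ] {s : ℕ → Set α} (hs : ∀ n, MeasurableSet (s n))
    (h : ∀ᵐ x ∂μ, ∀ᶠ n in atTop, x ∈ s n) :
    Tendsto (fun n => μ (s n)ᶜ) atTop (𝓝 0) := by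
  set t : ℕ → Set α := fun n => ⋃ k ≥ n, (s k)ᶜ
  have ht : Tendsto (μ ∘ t) atTop (𝓝 (μ (⋂ n, t n))) :=
    tendsto_measure_iInter_atTop
      (fun n => (MeasurableSet.biUnion (to_countable _) fun k _ => (hs k).compl).nullMeasurableSet)
      (fun a b hab => biUnion_mono (fun k hk => hab.trans hk) fun _ _ => subset_rfl)
      ⟨0, measure_ne_top μ _⟩
  have hnull : μ (⋂ n, t n) = 0 := by
    refine measure_eq_zero_iff_ae_notMem.mpr (h.mono fun x hx hxt => ?_)
    obtain ⟨N, hN⟩ := eventually_atTop.mp hx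
    obtain ⟨k, hk, hxk⟩ := mem_iUnion₂.mp (mem_iInter.mp hxt N)
    exact hxk (hN k hk)
  rw [hnull] at ht
  exact tendsto_of_tendsto_of_tendsto_of_le_of_le tendsto_const_nhds ht (fun _ => bot_le)
    fun n => measure_mono (subset_iUnion₂_of_subset n le_rfl subset_rfl)

section PartitionGraph

variable {S : Type*} {M : ℕ → ℕ} {A : ℕ → ℕ → Set S} {m : ℕ}

lemma exists_mem_cell (hcover : (⋃ i ∈ Finset.range (M m), A m i) = univ) (x : S) :
    ∃ i < M m, x ∈ A m i := by
  have hx : x ∈ ⋃ i ∈ Finset.range (M m), A m i := hcover ▸ mem_univ x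
  simpa using hx

lemma eq_of_mem_cell (hdisj : ∀ i < M m, ∀ j < M m, i ≠ j → Disjoint (A m i) (A m j))
    {i j : ℕ} {x : S} (hi : i < M m) (hj : j < M m) (hxi : x ∈ A m i) (hxj : x ∈ A m j) :
    i = j := by
  by_contra hij
  exact disjoint_left.mp (hdisj i hi j hj hij) hxi hxj

lemma eventually_cell_subset [PseudoEMetricSpace S] {x : S}
    (hx : ∀ ε : ENNReal, 0 < ε → ∃ m₀ : ℕ, ∀ m ≥ m₀, ∀ i < M m,
      x ∈ A m i → Metric.ediam (A m i) < ε)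
    {U : Set S} (hU : U ∈ 𝓝 x) : ∀ᶠ m in atTop, ∀ i < M m, x ∈ A m i → A m i ⊆ U := by
  obtain ⟨ε, hε, hball⟩ := EMetric.mem_nhds_iff.mp hU
  obtain ⟨m₀, hm₀⟩ := hx ε hε
  filter_upwards [eventually_ge_atTop m₀] with m hm i hi hxi y hy
  exact hball ((Metric.edist_le_ediam_of_mem hy hxi).trans_lt (hm₀ m hm i hi hxi))

variable [MeasurableSpace S] {μ : Measure S} {K : S → S → ℝ}

lemma IrreducibleKernel.measure_eq_zero_or_one [IsProbabilityMeasure μ]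
    (hirr : IrreducibleKernel K μ) {E : Set S} (hE : MeasurableSet E)
    (hclosed : ∀ᵐ p ∂μ.prod μ, p.1 ∈ E → K p.1 p.2 ≠ 0 → p.2 ∈ E) : μ E = 0 ∨ μ E = 1 := by
  by_contra h
  rw [not_or] at h
  refine hirr ⟨E, hE, pos_iff_ne_zero.mpr h.1, lt_of_le_of_ne prob_le_one h.2, ?_⟩
  filter_upwards [hclosed] with p hp h1 h2
  by_contra hK
  exact h2 (hp h1 hK)

def reachablePairs (K : S → S → ℝ) (μ : Measure S) (M : ℕ → ℕ) (A : ℕ → ℕ → Set S) (m : ℕ) :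
    Set (S × S) :=
  {p | ∃ i < M m, ∃ j < M m, p.1 ∈ A m i ∧ p.2 ∈ A m j ∧ 0 < μ (A m i) ∧ 0 < μ (A m j) ∧
    (partitionGraph K μ M A m).Reachable i j}

lemma measurableSet_reachablePairs (hmeas : ∀ i < M m, MeasurableSet (A m i)) :
    MeasurableSet (reachablePairs K μ M A m) := by
  have hunion : reachablePairs K μ M A m = ⋃ i, ⋃ (_ : i < M m), ⋃ j, ⋃ (_ : j < M m),
      ⋃ (_ : 0 < μ (A m i) ∧ 0 < μ (A m j) ∧ (partitionGraph K μ M A m).Reachable i j),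
        A m i ×ˢ A m j := by
    ext p
    simp only [reachablePairs, mem_iUnion, mem_prod, exists_prop]
    aesop
  rw [hunion]
  exact .iUnion fun i => .iUnion fun hi => .iUnion fun j => .iUnion fun hj => .iUnion fun _ =>
    (hmeas i hi).prod (hmeas j hj)

lemma reachablePairs_trans (hdisj : ∀ i < M m, ∀ j < M m, i ≠ j → Disjoint (A m i) (A m j))
    {a b c : S} (hab : (a, b) ∈ reachablePairs K μ M A m)
    (hbc : (b, c) ∈ reachablePairs K μ M A m) : (a, c) ∈ reachablePairs K μ M A m := by
  obtain ⟨i, hi, j, hj, hai, hbj, hμi, -, hij⟩ := hab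
  obtain ⟨j', hj', k, hk, hbj', hck, -, hμk, hjk⟩ := hbc
  obtain rfl := eq_of_mem_cell hdisj hj hj' hbj hbj'
  exact ⟨i, hi, k, hk, hai, hck, hμi, hμk, hij.trans hjk⟩

lemma partitionGraph_reachable_of_le (hKsymm : ∀ x y, K x y = K y x) {i j : ℕ}
    (hi : i < M m) (hj : j < M m) (hμi : 0 < μ (A m i)) (hμj : 0 < μ (A m j)) {β : ℝ}
    (hβ : 0 < β) (hK : ∀ x ∈ A m i, ∀ y ∈ A m j, β ≤ K x y) :
    (partitionGraph K μ M A m).Reachable i j := by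
  rcases eq_or_ne i j with rfl | hij
  · rfl
  · exact SimpleGraph.Adj.reachable ⟨hij, hi, hj, hμi, hμj, β, hβ,
      fun x hx y hy => ⟨hK x hx y hy, hKsymm y x ▸ hK x hx y hy⟩⟩

lemma lt_and_measure_pos_of_mem_supp {i₀ j : ℕ} (hi₀ : i₀ < M m) (hμi₀ : 0 < μ (A m i₀))
    (hj : j ∈ ((partitionGraph K μ M A m).connectedComponentMk i₀).supp) :
    j < M m ∧ 0 < μ (A m j) := by
  obtain ⟨w⟩ := SimpleGraph.ConnectedComponent.exact hj
  cases w with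
  | nil => exact ⟨hi₀, hμi₀⟩
  | cons hadj _ => exact ⟨hadj.2.1, hadj.2.2.2.1⟩

lemma eventually_exists_component_measure_compl_lt [IsFiniteMeasure μ]
    (hcover : ∀ m, (⋃ i ∈ Finset.range (M m), A m i) = univ)
    (hdisj : ∀ m, ∀ i < M m, ∀ j < M m, i ≠ j → Disjoint (A m i) (A m j))
    (hmeas : ∀ m, ∀ i < M m, MeasurableSet (A m i)) {x₀ : S}
    (hx₀ : ∀ m i, x₀ ∈ A m i → 0 < μ (A m i))
    (hae : ∀ᵐ y ∂μ, ∀ᶠ m in atTop, (x₀, y) ∈ reachablePairs K μ M A m)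
    {ε : ENNReal} (hε : 0 < ε) :
    ∀ᶠ m in atTop, ∃ c : (partitionGraph K μ M A m).ConnectedComponent,
      (∀ i ∈ c.supp, i < M m ∧ 0 < μ (A m i)) ∧ μ (univ \ ⋃ i ∈ c.supp, A m i) < ε := by
  have hlim := tendsto_measure_compl_of_ae_eventually_mem
    (fun m => (measurableSet_reachablePairs (hmeas m)).preimage measurable_prodMk_left) hae
  filter_upwards [hlim.eventually_lt_const hε] with m hm
  obtain ⟨i₀, hi₀, hx₀i₀⟩ := exists_mem_cell (hcover m) x₀
  refine ⟨_, fun j hj => lt_and_measure_pos_of_mem_supp hi₀ (hx₀ m i₀ hx₀i₀) hj,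
    lt_of_le_of_lt (measure_mono ?_) hm⟩
  rintro y ⟨-, hy⟩ ⟨i, hi, j, hj, hx₀i, hyj, -, -, hij⟩
  obtain rfl := eq_of_mem_cell (hdisj m) hi hi₀ hx₀i hx₀i₀
  exact hy (mem_biUnion ((SimpleGraph.ConnectedComponent.mem_supp_iff _ _).mpr
    (SimpleGraph.ConnectedComponent.sound hij.symm)) hyj)

lemma eventually_mem_reachablePairs [PseudoEMetricSpace S] (hKsymm : ∀ x y, K x y = K y x)
    (hcover : ∀ m, (⋃ i ∈ Finset.range (M m), A m i) = univ) {x y : S}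
    (hx : ∀ m i, x ∈ A m i → 0 < μ (A m i)) (hy : ∀ m i, y ∈ A m i → 0 < μ (A m i))
    (hxdiam : ∀ ε : ENNReal, 0 < ε → ∃ m₀ : ℕ, ∀ m ≥ m₀, ∀ i < M m,
      x ∈ A m i → Metric.ediam (A m i) < ε)
    (hydiam : ∀ ε : ENNReal, 0 < ε → ∃ m₀ : ℕ, ∀ m ≥ m₀, ∀ i < M m,
      y ∈ A m i → Metric.ediam (A m i) < ε)
    (hc : ContinuousAt (Function.uncurry K) (x, y)) (hK : 0 < K x y) :
    ∀ᶠ m in atTop, (x, y) ∈ reachablePairs K μ M A m := by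
  obtain ⟨U, hU, V, hV, hUV⟩ := mem_nhds_prod_iff.mp (hc.eventually_const_lt (half_lt_self hK))
  filter_upwards [eventually_cell_subset hxdiam hU, eventually_cell_subset hydiam hV]
    with m hUm hVm
  obtain ⟨i, hi, hxi⟩ := exists_mem_cell (hcover m) x
  obtain ⟨j, hj, hyj⟩ := exists_mem_cell (hcover m) y
  refine ⟨i, hi, j, hj, hxi, hyj, hx m i hxi, hy m j hyj,
    partitionGraph_reachable_of_le hKsymm hi hj (hx m i hxi) (hy m j hyj) (half_pos hK) ?_⟩
  exact fun x' hx' y' hy' => (hUV (mk_mem_prod (hUm i hi hxi hx') (hVm j hj hyj hy'))).le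

lemma mem_reachablePairs_of_measure_eq_zero_or_one [IsProbabilityMeasure μ]
    (h01 : ∀ B, MeasurableSet B → μ B = 0 ∨ μ B = 1)
    (hcover : (⋃ i ∈ Finset.range (M m), A m i) = univ)
    (hdisj : ∀ i < M m, ∀ j < M m, i ≠ j → Disjoint (A m i) (A m j))
    (hmeas : ∀ i < M m, MeasurableSet (A m i)) {x y : S}
    (hx : ∀ i, x ∈ A m i → 0 < μ (A m i)) (hy : ∀ i, y ∈ A m i → 0 < μ (A m i)) :
    (x, y) ∈ reachablePairs K μ M A m := by
  obtain ⟨i, hi, hxi⟩ := exists_mem_cell hcover x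
  obtain ⟨j, hj, hyj⟩ := exists_mem_cell hcover y
  obtain rfl : i = j := by
    by_contra hij
    have hcompl : μ (A m j)ᶜ = 0 :=
      (prob_compl_eq_zero_iff (hmeas j hj)).mpr ((h01 _ (hmeas j hj)).resolve_left (hy j hyj).ne')
    exact (hx i hxi).ne' (measure_mono_null (hdisj i hi j hj hij).subset_compl_right hcompl)
  exact ⟨i, hi, i, hi, hxi, hyj, hx i hxi, hy i hyj, .rfl⟩

lemma ae_eventually_mem_reachablePairs [PseudoEMetricSpace S] (hKsymm : ∀ x y, K x y = K y x)
    (hKnonneg : ∀ x y, 0 ≤ K x y)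
    (hcont : ∀ᵐ p ∂(μ.prod μ), ContinuousAt (Function.uncurry K) p)
    (hcover : ∀ m, (⋃ i ∈ Finset.range (M m), A m i) = univ)
    (hdiam : ∀ᵐ x ∂μ, ∀ ε : ENNReal, 0 < ε → ∃ m₀ : ℕ, ∀ m ≥ m₀, ∀ i < M m,
      x ∈ A m i → Metric.ediam (A m i) < ε) :
    ∀ᵐ p ∂μ.prod μ, K p.1 p.2 ≠ 0 → ∀ᶠ m in atTop, p ∈ reachablePairs K μ M A m := by
  have hgood := (ae_forall_mem_imp_measure_pos μ fun q : ℕ × ℕ => A q.1 q.2).and hdiam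
  filter_upwards [hcont, Measure.quasiMeasurePreserving_fst.ae hgood,
    Measure.quasiMeasurePreserving_snd.ae hgood] with p hp h₁ h₂ hK
  exact eventually_mem_reachablePairs hKsymm hcover (fun m i => h₁.1 (m, i))
    (fun m i => h₂.1 (m, i)) h₁.2 h₂.2 hp ((hKnonneg _ _).lt_of_ne' hK)

lemma exists_ae_eventually_mem_reachablePairs [PseudoEMetricSpace S] [IsProbabilityMeasure μ]
    (hKsymm : ∀ x y, K x y = K y x) (hKnonneg : ∀ x y, 0 ≤ K x y)
    (hirr : IrreducibleKernel K μ)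
    (hcont : ∀ᵐ p ∂(μ.prod μ), ContinuousAt (Function.uncurry K) p)
    (hcover : ∀ m, (⋃ i ∈ Finset.range (M m), A m i) = univ)
    (hdisj : ∀ m, ∀ i < M m, ∀ j < M m, i ≠ j → Disjoint (A m i) (A m j))
    (hmeas : ∀ m, ∀ i < M m, MeasurableSet (A m i))
    (hdiam : ∀ᵐ x ∂μ, ∀ ε : ENNReal, 0 < ε → ∃ m₀ : ℕ, ∀ m ≥ m₀, ∀ i < M m,
      x ∈ A m i → Metric.ediam (A m i) < ε) :
    ∃ x₀, (∀ m i, x₀ ∈ A m i → 0 < μ (A m i)) ∧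
      ∀ᵐ y ∂μ, ∀ᶠ m in atTop, (x₀, y) ∈ reachablePairs K μ M A m := by
  set R : Set (S × S) := {p | ∀ᶠ m in atTop, p ∈ reachablePairs K μ M A m}
  have hR : MeasurableSet R := by
    convert MeasurableSet.measurableSet_liminf fun m =>
      measurableSet_reachablePairs (K := K) (μ := μ) (hmeas m)
    exact Set.ext fun p => mem_liminf_iff_eventually_mem.symm
  have hgood := ae_forall_mem_imp_measure_pos μ fun q : ℕ × ℕ => A q.1 q.2
  have hKR := ae_eventually_mem_reachablePairs hKsymm hKnonneg hcont hcover hdiam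
  by_cases hK0 : ∀ᵐ p ∂μ.prod μ, K p.1 p.2 = 0
  · have h01 : ∀ B, MeasurableSet B → μ B = 0 ∨ μ B = 1 := fun B hB =>
      hirr.measure_eq_zero_or_one hB (hK0.mono fun p hp _ hne => absurd hp hne)
    obtain ⟨x₀, hx₀⟩ := hgood.exists
    exact ⟨x₀, fun m i => hx₀ (m, i), hgood.mono fun y hy => .of_forall fun m =>
      mem_reachablePairs_of_measure_eq_zero_or_one h01 (hcover m) (hdisj m) (hmeas m)
        (fun i => hx₀ (m, i)) (fun i => hy (m, i))⟩
  · have hfreq : ∃ᶠ x in ae μ, μ (Prod.mk x ⁻¹' R) ≠ 0 := by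
      refine not_eventually.mp fun h => hK0 ?_
      have hnull : ∀ᵐ p ∂μ.prod μ, p ∉ R :=
        measure_eq_zero_iff_ae_notMem.mp ((Measure.measure_prod_null hR).mpr h)
      filter_upwards [hKR, hnull] with p hp hpR
      exact not_not.mp (mt hp hpR)
    obtain ⟨x₀, hx₀, hRx₀⟩ := (hgood.and_frequently hfreq).exists
    have hclosed : ∀ᵐ p ∂μ.prod μ, p.1 ∈ Prod.mk x₀ ⁻¹' R → K p.1 p.2 ≠ 0 →
        p.2 ∈ Prod.mk x₀ ⁻¹' R := by
      filter_upwards [hKR] with p hp h₁ hK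
      exact (h₁.and (hp hK)).mono fun m h => reachablePairs_trans (hdisj m) h.1 h.2
    have hE : MeasurableSet (Prod.mk x₀ ⁻¹' R) := hR.preimage measurable_prodMk_left
    have hfull := (hirr.measure_eq_zero_or_one hE hclosed).resolve_left hRx₀
    exact ⟨x₀, fun m i => hx₀ (m, i), mem_ae_iff.mpr ((prob_compl_eq_zero_iff hE).mpr hfull)⟩

end PartitionGraph

theorem partition_graph_giant_component_general
    {S : Type*} [MetricSpace S]
    [MeasurableSpace S]
    (μ : Measure S) [IsProbabilityMeasure μ] (K : S → S → ℝ)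
    (hKsymm : ∀ x y, K x y = K y x)
    (hKnonneg : ∀ x y, 0 ≤ K x y)
    (hirr : IrreducibleKernel K μ)
    (hcont : ∀ᵐ p ∂(μ.prod μ), ContinuousAt (Function.uncurry K) p)
    -- the partition sequence, as in Lemma 3.4
    (M : ℕ → ℕ) (A : ℕ → ℕ → Set S)
    (hcover : ∀ m, (⋃ i ∈ Finset.range (M m), A m i) = Set.univ)
    (hdisj : ∀ m, ∀ i < M m, ∀ j < M m, i ≠ j → Disjoint (A m i) (A m j))
    (hmeas : ∀ m, ∀ i < M m, MeasurableSet (A m i))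
    (hdiam : ∀ᵐ x ∂μ, ∀ ε : ENNReal, 0 < ε → ∃ m₀ : ℕ, ∀ m ≥ m₀, ∀ i < M m,
      x ∈ A m i → EMetric.diam (A m i) < ε)
    (ε : ℝ) (hε : 0 < ε) :
    ∃ (m : ℕ) (c : (partitionGraph K μ M A m).ConnectedComponent),
      1 ≤ m ∧
      (∀ i ∈ c.supp, i < M m ∧ 0 < μ (A m i)) ∧
      μ (Set.univ \ ⋃ i ∈ c.supp, A m i) < ENNReal.ofReal ε := by
  obtain ⟨x₀, hx₀, hae⟩ := exists_ae_eventually_mem_reachablePairs hKsymm hKnonneg hirr hcont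
    hcover hdisj hmeas hdiam
  obtain ⟨m, hm, c, hc⟩ := ((eventually_ge_atTop 1).and
    (eventually_exists_component_measure_compl_lt hcover hdisj hmeas hx₀ hae
      (ENNReal.ofReal_pos.mpr hε))).exists
  exact ⟨m, c, hm, hc⟩

/-- **A component of the partition graph covers almost everything** (Lemma 3.6).
If `K` is irreducible and continuous `(μ ⊗ μ)`-a.e., then for any `ε > 0` there are `m ≥ 1`
and a connected component `C_m` of `H_m` with `μ(S \ ⋃_{i ∈ C_m} A m i) < ε`. -/
theorem partition_graph_giant_component
    {S : Type*} [MetricSpace S] [TopologicalSpace.SeparableSpace S]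
    [MeasurableSpace S] [BorelSpace S]
    (μ : Measure S) [IsProbabilityMeasure μ] (K : S → S → ℝ)
    (hKsymm : ∀ x y, K x y = K y x)
    (hKnonneg : ∀ x y, 0 ≤ K x y)
    (hKmeas : Measurable (Function.uncurry K))
    (hKint : Integrable (Function.uncurry K) (μ.prod μ))
    (hirr : IrreducibleKernel K μ)
    (hcont : ∀ᵐ p ∂(μ.prod μ), ContinuousAt (Function.uncurry K) p)
    -- the partition sequence, as in Lemma 3.4
    (M : ℕ → ℕ) (A : ℕ → ℕ → Set S)
    (hM : ∀ m, 1 ≤ M m)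
    (hcover : ∀ m, (⋃ i ∈ Finset.range (M m), A m i) = Set.univ)
    (hdisj : ∀ m, ∀ i < M m, ∀ j < M m, i ≠ j → Disjoint (A m i) (A m j))
    (hmeas : ∀ m, ∀ i < M m, MeasurableSet (A m i))
    (hbd : ∀ m, ∀ i < M m, μ (frontier (A m i)) = 0)
    (href : ∀ m, ∀ i < M m,
      A m i = ⋃ j ∈ {j | j < M (m+1) ∧ A (m+1) j ⊆ A m i}, A (m+1) j)
    (hdiam : ∀ᵐ x ∂μ, ∀ ε : ENNReal, 0 < ε → ∃ m₀ : ℕ, ∀ m ≥ m₀, ∀ i < M m,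
      x ∈ A m i → EMetric.diam (A m i) < ε)
    (ε : ℝ) (hε : 0 < ε) :
    ∃ (m : ℕ) (c : (partitionGraph K μ M A m).ConnectedComponent),
      1 ≤ m ∧
      (∀ i ∈ c.supp, i < M m ∧ 0 < μ (A m i)) ∧
      μ (Set.univ \ ⋃ i ∈ c.supp, A m i) < ENNReal.ofReal ε :=
  partition_graph_giant_component_general μ K hKsymm hKnonneg hirr hcont M A hcover hdisj hmeas
    hdiam ε hε
end
end

section
/- For the kernel K on [0,1] one has ∫₀¹ K(x,y)² dy = c²/x for every x ∈ (0, 1/2], and ∫₀¹ K(x,y)² dy = 3c²/(2x) − c² for every x ∈ (1/2, 1]. Consequently λ₂ ∉ L²([0,1], μ) and λ₂ ∉ L∞([0,1], μ). -/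
/-! For `x > 0` the row `y ↦ K(x,y)` equals `c/x` on `(x/2, x)`, `c/y` on `(x, 2x)` and vanishes
elsewhere, so `∫₀¹ K(x,y)² dy = c²/(2x) + c²/x - c²/min(2x,1)`. On `(0,1/2]` this is `c²/x`, which
is not integrable at `0`, so `λ₂ ∉ L²`; as `[0,1]` has finite measure, also `λ₂ ∉ L∞`. -/

open MeasureTheory Filter Set

noncomputable section

/-- The example kernel of Section 4 on `S = [0,1]`:
`K(x,y) = (c/x) 1_{[x/2,x]}(y) + (c/y) 1_{[y/2,y]}(x)` for `x, y ∈ (0,1]`, and `K = 0` when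
`x = 0` or `y = 0` (note that both clauses below indeed vanish in that case). -/
def Kex (c : ℝ) (x y : ℝ) : ℝ :=
  (if y ∈ Set.Icc (x/2) x then c / x else 0) + (if x ∈ Set.Icc (y/2) y then c / y else 0)

open scoped Interval

theorem intervalIntegrable_congr_Ioo_of_le {E : Type*} [NormedAddCommGroup E] {μ : Measure ℝ}
    [NullSingletonClass μ] {f g : ℝ → E} {a b : ℝ} (hab : a ≤ b) (h : EqOn f g (Ioo a b)) :
    IntervalIntegrable f μ a b ↔ IntervalIntegrable g μ a b :=
  intervalIntegrable_congr_uIoo (uIoo_of_le hab ▸ h)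

section

variable {a b : ℝ}

theorem intervalIntegrable_const_div_sq (k : ℝ) (h : (0 : ℝ) ∉ [[a, b]]) :
    IntervalIntegrable (fun y => k / y ^ 2) volume a b :=
  (continuousOn_const.div (continuousOn_id.pow 2)
    fun _ hy => pow_ne_zero 2 fun h0 => h (h0 ▸ hy)).intervalIntegrable

theorem integral_const_div_sq (k : ℝ) (h : (0 : ℝ) ∉ [[a, b]]) :
    ∫ y in a..b, k / y ^ 2 = k / a - k / b := by
  rw [intervalIntegral.integral_eq_sub_of_hasDerivAt (f := fun y => -k / y)
    (fun y hy => ?_) (intervalIntegrable_const_div_sq k h)]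
  · ring
  · have hy0 : y ≠ 0 := fun h0 => h (h0 ▸ hy)
    simpa [div_eq_mul_inv] using (hasDerivAt_inv hy0).const_mul (-k)

end

theorem not_integrableOn_Ioc_const_div {k b : ℝ} (hk : k ≠ 0) (hb : 0 < b) :
    ¬ IntegrableOn (fun x => k / x) (Ioc 0 b) := by
  intro h
  have hinv : IntervalIntegrable (fun x : ℝ => x⁻¹) volume 0 b := by
    rw [intervalIntegrable_iff_integrableOn_Ioc_of_le hb.le, IntegrableOn,
      ← integrable_const_mul_iff (isUnit_iff_ne_zero.mpr hk)]
    simpa only [IntegrableOn, div_eq_mul_inv] using h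
  simp [hb.ne, hb.le] at hinv

theorem MeasureTheory.Integrable.of_memLp_two_sqrt {α : Type*} [MeasurableSpace α]
    {μ : Measure α} {f : α → ℝ} (hf : 0 ≤ f) (h : MemLp (fun x => √(f x)) 2 μ) :
    Integrable f μ := by
  simpa only [Real.sq_sqrt (hf _)] using
    (memLp_two_iff_integrable_sq h.aestronglyMeasurable).mp h

section

variable {c x y : ℝ}

theorem Kex_eq_zero_of_lt_half (hx : 0 < x) (hy : y < x / 2) : Kex c x y = 0 := by
  rw [Kex, if_neg, if_neg, add_zero]
  · rintro ⟨-, hxy⟩; linarith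
  · rintro ⟨h, -⟩; linarith

theorem Kex_eq_of_mem_Ioo_half (hy : y ∈ Ioo (x / 2) x) : Kex c x y = c / x := by
  rw [Kex, if_pos (Ioo_subset_Icc_self hy), if_neg, add_zero]
  rintro ⟨-, hxy⟩; linarith [hy.2]

theorem Kex_eq_of_mem_Ioo_double (hy : y ∈ Ioo x (2 * x)) : Kex c x y = c / y := by
  rw [Kex, if_neg, if_pos ⟨by linarith [hy.2], hy.1.le⟩, zero_add]
  rintro ⟨-, hyx⟩; linarith [hy.1]

theorem Kex_eq_zero_of_double_lt (hx : 0 < x) (hy : 2 * x < y) : Kex c x y = 0 := by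
  rw [Kex, if_neg, if_neg, add_zero]
  · rintro ⟨h, -⟩; linarith
  · rintro ⟨-, hyx⟩; linarith

theorem integral_Kex_sq (hx : 0 < x) (hx1 : x ≤ 1) :
    ∫ y in (0 : ℝ)..1, Kex c x y ^ 2 = c ^ 2 / (2 * x) + (c ^ 2 / x - c ^ 2 / min (2 * x) 1) := by
  set m := min (2 * x) 1
  have hxm : x ≤ m := le_min (by linarith) hx1
  have hm1 : m ≤ 1 := min_le_right _ _
  have hx0 : (0 : ℝ) ∉ [[x, m]] := by rw [uIcc_of_le hxm]; exact fun h => by linarith [h.1]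
  have low : EqOn (fun y => Kex c x y ^ 2) (fun _ => 0) (Ioo 0 (x / 2)) := fun y hy => by
    simp only [Kex_eq_zero_of_lt_half hx hy.2, zero_pow two_ne_zero]
  have mid : EqOn (fun y => Kex c x y ^ 2) (fun _ => (c / x) ^ 2) (Ioo (x / 2) x) :=
    fun y hy => by simp only [Kex_eq_of_mem_Ioo_half hy]
  have high : EqOn (fun y => Kex c x y ^ 2) (fun y => c ^ 2 / y ^ 2) (Ioo x m) := fun y hy => by
    simp only [Kex_eq_of_mem_Ioo_double ⟨hy.1, hy.2.trans_le (min_le_left _ _)⟩, div_pow]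
  have top : EqOn (fun y => Kex c x y ^ 2) (fun _ => 0) (Ioo m 1) := fun y hy => by
    have h2x : 2 * x < y := (min_lt_iff.mp hy.1).resolve_right hy.2.not_gt
    simp only [Kex_eq_zero_of_double_lt hx h2x, zero_pow two_ne_zero]
  have int_low := (intervalIntegrable_congr_Ioo_of_le (μ := volume) (by linarith) low).mpr
    intervalIntegrable_const
  have int_mid := (intervalIntegrable_congr_Ioo_of_le (μ := volume) (by linarith) mid).mpr
    intervalIntegrable_const
  have int_high := (intervalIntegrable_congr_Ioo_of_le hxm high).mpr
    (intervalIntegrable_const_div_sq _ hx0)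
  have int_top := (intervalIntegrable_congr_Ioo_of_le (μ := volume) hm1 top).mpr
    intervalIntegrable_const
  rw [← intervalIntegral.integral_add_adjacent_intervals int_low
      (int_mid.trans (int_high.trans int_top)),
    ← intervalIntegral.integral_add_adjacent_intervals int_mid (int_high.trans int_top),
    ← intervalIntegral.integral_add_adjacent_intervals int_high int_top,
    intervalIntegral.integral_congr_Ioo_of_le (by linarith) low,
    intervalIntegral.integral_congr_Ioo_of_le (by linarith) mid,
    intervalIntegral.integral_congr_Ioo_of_le hxm high,
    intervalIntegral.integral_congr_Ioo_of_le hm1 top, integral_const_div_sq _ hx0]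
  simp only [intervalIntegral.integral_zero, intervalIntegral.integral_const, smul_eq_mul]
  field_simp
  ring

end

/-- **The square degree function of the example kernel** (Section 4):
`∫₀¹ K(x,y)² dy = c²/x` on `(0,1/2]` and `= 3c²/(2x) - c²` on `(1/2,1]`; consequently
`λ₂ = (∫₀¹ K(·,y)² dy)^{1/2}` is neither in `L²` nor in `L∞` of Lebesgue measure on `[0,1]`. -/
theorem example_kernel_lambda2 (c : ℝ) (hc : 0 < c) :
    (∀ x ∈ Set.Ioc (0:ℝ) (1/2), (∫ y in (0:ℝ)..1, (Kex c x y) ^ 2) = c^2 / x) ∧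
    (∀ x ∈ Set.Ioc (1/2 : ℝ) 1,
      (∫ y in (0:ℝ)..1, (Kex c x y) ^ 2) = 3 * c^2 / (2*x) - c^2) ∧
    ¬ MemLp (fun x => Real.sqrt (∫ y in (0:ℝ)..1, (Kex c x y) ^ 2)) 2
        (volume.restrict (Set.Icc (0:ℝ) 1)) ∧
    ¬ MemLp (fun x => Real.sqrt (∫ y in (0:ℝ)..1, (Kex c x y) ^ 2)) ⊤
        (volume.restrict (Set.Icc (0:ℝ) 1)) := by
  have near_zero : ∀ x ∈ Ioc (0 : ℝ) (1 / 2), (∫ y in (0 : ℝ)..1, Kex c x y ^ 2) = c ^ 2 / x := by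
    rintro x ⟨hx, hx2⟩
    rw [integral_Kex_sq hx (by linarith), min_eq_left (by linarith)]
    field_simp
    ring
  have near_one : ∀ x ∈ Ioc (1 / 2 : ℝ) 1,
      (∫ y in (0 : ℝ)..1, Kex c x y ^ 2) = 3 * c ^ 2 / (2 * x) - c ^ 2 := by
    rintro x ⟨hx, hx1⟩
    rw [integral_Kex_sq (by linarith) hx1, min_eq_right (by linarith)]
    field_simp
    ring
  have not_L2 : ¬ MemLp (fun x => √(∫ y in (0 : ℝ)..1, Kex c x y ^ 2)) 2
      (volume.restrict (Icc (0 : ℝ) 1)) := fun h => by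
    have hint : IntegrableOn (fun x => ∫ y in (0 : ℝ)..1, Kex c x y ^ 2) (Icc 0 1) :=
      Integrable.of_memLp_two_sqrt (fun x => intervalIntegral.integral_nonneg zero_le_one
        fun y _ => sq_nonneg (Kex c x y)) h
    exact not_integrableOn_Ioc_const_div (pow_ne_zero 2 hc.ne') (by norm_num : (0 : ℝ) < 1 / 2)
      ((hint.mono_set fun x hx => ⟨hx.1.le, hx.2.trans (by norm_num)⟩).congr_fun near_zero
        measurableSet_Ioc)
  exact ⟨near_zero, near_one, not_L2, fun h => not_L2 (h.mono_exponent le_top)⟩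
end
end
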